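/- arXiv:1310.6442 — 4 statements merged into one kernel-verified Lean document; each statement's English description precedes it below -/
import Mathlib

section
/- For any divergence-free vector field w = (w¹, w², w³) in H^{1/2}(ℝ³) and any θ ∈ (0, 1/2), the quantity ‖∂₃w³‖_{H_θ} is bounded by a constant times ‖w‖_{H^{1/2}}, where H_θ denotes the anisotropic Sobolev space H^{-1/2+θ, -θ}. -/
/-!
The estimate holds pointwise in frequency, with `C = 1`. Divergence-freeness and Cauchy–Schwarz
give `|ξ₃| |Ŵ³| ≤ |ξ_h| |Ŵ_h|`. Writing `|ξ₃|^{2-2θ} |Ŵ³|² = (|ξ₃| |Ŵ³|)^{2-2θ} (|Ŵ³|²)^θ`, the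
weight becomes at most `|ξ_h| (|Ŵ_h|²)^{1-θ} (|Ŵ³|²)^θ`, and weighted AM-GM bounds this by
`|ξ_h| (|Ŵ_h|² + |Ŵ³|²) ≤ |ξ| |Ŵ|²`.
-/

open MeasureTheory ENNReal
open scoped NNReal

noncomputable section

/-- Horizontal frequency modulus `|ξ_h| = √(ξ₁² + ξ₂²)`. -/
def hmod (ξ : Fin 3 → ℝ) : ℝ := Real.sqrt (ξ 0 ^ 2 + ξ 1 ^ 2)

/-- Full frequency modulus `|ξ| = √(ξ₁² + ξ₂² + ξ₃²)`. -/
def fmod (ξ : Fin 3 → ℝ) : ℝ := Real.sqrt (ξ 0 ^ 2 + ξ 1 ^ 2 + ξ 2 ^ 2)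

lemma abs_mul_add_abs_mul_le_sqrt_mul_sqrt (x y a b : ℝ) :
    |x| * a + |y| * b ≤ √(x ^ 2 + y ^ 2) * √(a ^ 2 + b ^ 2) := by
  simpa [Fin.sum_univ_two, sq_abs] using
    Real.sum_mul_le_sqrt_mul_sqrt Finset.univ ![|x|, |y|] ![a, b]

lemma abs_mul_norm_le_hmod_mul_of_div_free {ξ : Fin 3 → ℝ} {W : Fin 3 → ℂ}
    (hdiv : ∑ i, (ξ i : ℂ) * W i = 0) :
    |ξ 2| * ‖W 2‖ ≤ hmod ξ * √(‖W 0‖ ^ 2 + ‖W 1‖ ^ 2) := by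
  rw [Fin.sum_univ_three, add_eq_zero_iff_eq_neg] at hdiv
  calc |ξ 2| * ‖W 2‖ = ‖(ξ 0 : ℂ) * W 0 + (ξ 1 : ℂ) * W 1‖ := by
        rw [hdiv, norm_neg, norm_mul, Complex.norm_real, Real.norm_eq_abs]
    _ ≤ |ξ 0| * ‖W 0‖ + |ξ 1| * ‖W 1‖ := by
        simpa [norm_mul] using norm_add_le ((ξ 0 : ℂ) * W 0) ((ξ 1 : ℂ) * W 1)
    _ ≤ hmod ξ * √(‖W 0‖ ^ 2 + ‖W 1‖ ^ 2) := abs_mul_add_abs_mul_le_sqrt_mul_sqrt _ _ _ _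

lemma rpow_weight_mul_sq_le_of_mul_le_mul {θ h t c s : ℝ} (hθ0 : 0 ≤ θ) (hθ1 : θ ≤ 1)
    (hh : 0 ≤ h) (ht : 0 ≤ t) (hc : 0 ≤ c) (hs : 0 ≤ s) (htc : t * c ≤ h * s) :
    h ^ (-1 + 2 * θ) * t ^ (-(2 * θ)) * t ^ 2 * c ^ 2 ≤ h * (s ^ 2 + c ^ 2) := by
  rcases (mul_nonneg ht hc).eq_or_lt with htc0 | htc0
  · calc h ^ (-1 + 2 * θ) * t ^ (-(2 * θ)) * t ^ 2 * c ^ 2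
          = h ^ (-1 + 2 * θ) * t ^ (-(2 * θ)) * (t * c) ^ 2 := by ring
      _ = 0 := by rw [← htc0]; ring
      _ ≤ h * (s ^ 2 + c ^ 2) := by positivity
  have htp : 0 < t := pos_of_mul_pos_left htc0 hc
  have hcp : 0 < c := pos_of_mul_pos_right htc0 ht
  have hhp : 0 < h := pos_of_mul_pos_left (htc0.trans_le htc) hs
  have split : t ^ (-(2 * θ)) * t ^ 2 * c ^ 2 = (t * c) ^ (2 - 2 * θ) * (c ^ 2) ^ θ := by
    rw [Real.mul_rpow ht hc, ← Real.rpow_natCast_mul hc, mul_assoc (t ^ (2 - 2 * θ)),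
      ← Real.rpow_add hcp, ← Real.rpow_natCast t 2, ← Real.rpow_add htp]
    norm_num [neg_add_eq_sub]
  calc h ^ (-1 + 2 * θ) * t ^ (-(2 * θ)) * t ^ 2 * c ^ 2
      = h ^ (-1 + 2 * θ) * ((t * c) ^ (2 - 2 * θ) * (c ^ 2) ^ θ) := by rw [← split]; ring
    _ ≤ h ^ (-1 + 2 * θ) * ((h * s) ^ (2 - 2 * θ) * (c ^ 2) ^ θ) := by
        gcongr; linarith
    _ = h * ((s ^ 2) ^ (1 - θ) * (c ^ 2) ^ θ) := by
        rw [Real.mul_rpow hh hs, ← Real.rpow_natCast_mul hs, ← mul_assoc, ← mul_assoc,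
          ← Real.rpow_add hhp]
        norm_num
        ring_nf
    _ ≤ h * (s ^ 2 + c ^ 2) := by
        gcongr
        have := Real.geom_mean_le_arith_mean2_weighted (by linarith) hθ0 (sq_nonneg s)
          (sq_nonneg c) (sub_add_cancel 1 θ)
        nlinarith [sq_nonneg s, sq_nonneg c]

lemma fmod_nonneg (ξ : Fin 3 → ℝ) : 0 ≤ fmod ξ := Real.sqrt_nonneg _

lemma hmod_le_fmod (ξ : Fin 3 → ℝ) : hmod ξ ≤ fmod ξ :=
  Real.sqrt_le_sqrt (le_add_of_nonneg_right (sq_nonneg _))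

lemma anisotropic_weight_mul_sq_le_of_div_free {θ : ℝ} (hθ0 : 0 ≤ θ) (hθ1 : θ ≤ 1)
    {ξ : Fin 3 → ℝ} {W : Fin 3 → ℂ} (hdiv : ∑ i, (ξ i : ℂ) * W i = 0) :
    hmod ξ ^ (-1 + 2 * θ) * |ξ 2| ^ (-(2 * θ)) * ξ 2 ^ 2 * ‖W 2‖ ^ 2 ≤
      fmod ξ * ∑ i, ‖W i‖ ^ 2 := by
  have hs := Real.sqrt_nonneg (‖W 0‖ ^ 2 + ‖W 1‖ ^ 2)
  calc hmod ξ ^ (-1 + 2 * θ) * |ξ 2| ^ (-(2 * θ)) * ξ 2 ^ 2 * ‖W 2‖ ^ 2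
      ≤ hmod ξ * (√(‖W 0‖ ^ 2 + ‖W 1‖ ^ 2) ^ 2 + ‖W 2‖ ^ 2) := by
        rw [← sq_abs (ξ 2)]
        exact rpow_weight_mul_sq_le_of_mul_le_mul hθ0 hθ1 (Real.sqrt_nonneg _) (abs_nonneg _)
          (norm_nonneg _) hs (abs_mul_norm_le_hmod_mul_of_div_free hdiv)
    _ ≤ fmod ξ * ∑ i, ‖W i‖ ^ 2 := by
        rw [Real.sq_sqrt (by positivity), Fin.sum_univ_three]
        exact mul_le_mul_of_nonneg_right (hmod_le_fmod ξ) (by positivity)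

/-- `W` stands for the Fourier transform `ŵ`; both sides are squared norms. -/
theorem stmt2 (θ : ℝ) (hθ0 : 0 < θ) (hθ : θ < 1/2) :
    ∃ C : ℝ≥0, 0 < C ∧ ∀ W : (Fin 3 → ℝ) → (Fin 3 → ℂ),
      (∀ ξ, ∑ i, (ξ i : ℂ) * W ξ i = 0) →
      ∫⁻ ξ, ENNReal.ofReal (hmod ξ ^ (-1 + 2*θ) * |ξ 2| ^ (-(2*θ)) * (ξ 2) ^ 2)
          * (‖W ξ 2‖₊ : ℝ≥0∞) ^ 2
        ≤ C * ∫⁻ ξ, ENNReal.ofReal (fmod ξ) * ∑ i, (‖W ξ i‖₊ : ℝ≥0∞) ^ 2 := by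
  refine ⟨1, one_pos, fun W hdiv => ?_⟩
  rw [ENNReal.coe_one, one_mul]
  refine lintegral_mono fun ξ => ?_
  have hweight : 0 ≤ hmod ξ ^ (-1 + 2*θ) * |ξ 2| ^ (-(2*θ)) * (ξ 2) ^ 2 := by
    unfold hmod; positivity
  simp only [← enorm_eq_nnnorm, ← ofReal_norm, ← ENNReal.ofReal_pow (norm_nonneg _)]
  rw [← ENNReal.ofReal_mul hweight, ← ENNReal.ofReal_sum_of_nonneg (fun i _ => by positivity),
    ← ENNReal.ofReal_mul (fmod_nonneg ξ)]
  exact ENNReal.ofReal_le_ofReal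
    (anisotropic_weight_mul_sq_le_of_div_free hθ0.le (by linarith) (hdiv ξ))
end
end

section
/- Let a : ℝ³ → ℝ be a measurable function such that a_{3/4} := a|a|^{-1/4} belongs to L²(ℝ³) with ∇(a_{3/4}) ∈ L²(ℝ³). Then ‖∇a‖_{L^{3/2}} ≤ C ‖∇a_{3/4}‖_{L²} · ‖a_{3/4}‖_{L²}^{1/3}. -/
/-!
Since `a = g ∘ a_{3/4}` with `g t = t |t|^{1/3}`, and `g` is `C¹` with `g' t = (4/3) |t|^{1/3}`,
the chain rule gives `|∇a| = (4/3) |a_{3/4}|^{1/3} |∇a_{3/4}|` pointwise. Hölder's inequality with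
`2/3 = 1/6 + 1/2` and `‖|a_{3/4}|^{1/3}‖_{L⁶} = ‖a_{3/4}‖_{L²}^{1/3}` then gives the bound with
`C = 4/3`.
-/

open MeasureTheory ENNReal
open scoped NNReal

noncomputable section

/-- `a_{3/4} = sign(a) |a|^{3/4}`. -/
def aPow34 (a : (Fin 3 → ℝ) → ℝ) (x : Fin 3 → ℝ) : ℝ :=
  Real.sign (a x) * |a x| ^ ((3:ℝ)/4)

open Filter Topology in
theorem hasDerivAt_mul_abs_rpow {p : ℝ} (hp : 0 < p) (t : ℝ) :
    HasDerivAt (fun s : ℝ => s * |s| ^ p) ((p + 1) * |t| ^ p) t := by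
  rcases eq_or_ne t 0 with rfl | ht
  · rw [hasDerivAt_iff_tendsto_slope_zero]
    have hcont : Tendsto (fun s : ℝ => |s| ^ p) (𝓝[≠] 0) (𝓝 0) := by
      have := ((continuous_abs.rpow_const fun _ => Or.inr hp.le).tendsto (0 : ℝ)).mono_left
        (nhdsWithin_le_nhds (s := {0}ᶜ))
      simpa [Real.zero_rpow hp.ne'] using this
    refine (hcont.congr' ?_).trans (by simp [Real.zero_rpow hp.ne'])
    filter_upwards [self_mem_nhdsWithin] with s (hs : s ≠ 0)
    simp [hs]
  · refine ((hasDerivAt_id' t).mul ((hasDerivAt_abs ht).rpow_const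
      (Or.inl (abs_ne_zero.2 ht)))).congr_deriv ?_
    have h : t * (SignType.sign t : ℝ) = |t| := self_mul_sign t
    rw [Real.rpow_sub_one (abs_ne_zero.2 ht)]
    field_simp
    linear_combination p * h

theorem norm_fderiv_mul_abs_rpow {E : Type*} [NormedAddCommGroup E] [NormedSpace ℝ E]
    {v : E → ℝ} {x : E} (hv : DifferentiableAt ℝ v x) {p : ℝ} (hp : 0 < p) :
    ‖fderiv ℝ (fun y => v y * |v y| ^ p) x‖ = (p + 1) * |v x| ^ p * ‖fderiv ℝ v x‖ := by
  have h : HasFDerivAt (fun y => v y * |v y| ^ p) (((p + 1) * |v x| ^ p) • fderiv ℝ v x) x :=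
    (hasDerivAt_mul_abs_rpow hp (v x)).comp_hasFDerivAt x hv.hasFDerivAt
  rw [h.fderiv, norm_smul, Real.norm_of_nonneg (by positivity)]

theorem sign_mul_abs_rpow_mul_abs_rpow {α : ℝ} (hα : α ≠ 0) (y : ℝ) :
    Real.sign y * |y| ^ α * |Real.sign y * |y| ^ α| ^ (α⁻¹ - 1) = y := by
  rcases eq_or_ne y 0 with rfl | hy
  · simp
  have hsign : |Real.sign y| = 1 := by
    rcases Real.sign_apply_eq_of_ne_zero y hy with h | h <;> simp [h]
  have hpos : 0 < |y| := abs_pos.2 hy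
  rw [abs_mul, hsign, one_mul, abs_of_nonneg (Real.rpow_nonneg hpos.le α), ← Real.rpow_mul hpos.le,
    mul_assoc, ← Real.rpow_add hpos, mul_sub, mul_inv_cancel₀ hα, mul_one, add_sub_cancel,
    Real.rpow_one]
  rcases hy.lt_or_gt with h | h
  · rw [Real.sign_of_neg h, abs_of_neg h]; ring
  · rw [Real.sign_of_pos h, abs_of_pos h]; ring

theorem aPow34_mul_abs_rpow (a : (Fin 3 → ℝ) → ℝ) (x : Fin 3 → ℝ) :
    aPow34 a x * |aPow34 a x| ^ (1 / 3 : ℝ) = a x := by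
  have h := sign_mul_abs_rpow_mul_abs_rpow (α := 3 / 4) (by norm_num) (a x)
  rwa [show (3 / 4 : ℝ)⁻¹ - 1 = 1 / 3 by norm_num] at h

theorem norm_fderiv_eq_norm_fderiv_aPow34 {a : (Fin 3 → ℝ) → ℝ}
    (hdiff : Differentiable ℝ (aPow34 a)) (x : Fin 3 → ℝ) :
    ‖fderiv ℝ a x‖ = (4 / 3 : ℝ) * (|aPow34 a x| ^ (1 / 3 : ℝ) * ‖fderiv ℝ (aPow34 a) x‖) := by
  have h := norm_fderiv_mul_abs_rpow (hdiff x) (p := 1 / 3) (by norm_num)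
  rw [funext (aPow34_mul_abs_rpow a)] at h
  rw [h]
  ring

theorem eLpNorm_abs_rpow_mul_le {Ω : Type*} [MeasurableSpace Ω] {μ : Measure Ω}
    {v F : Ω → ℝ} (hv : AEStronglyMeasurable v μ) (hF : AEStronglyMeasurable F μ)
    {s : ℝ} (hs : 0 < s) {p q r : ℝ≥0∞} [HolderTriple p q r] :
    eLpNorm (fun x => |v x| ^ s * F x) r μ ≤
      eLpNorm v (p * ENNReal.ofReal s) μ ^ s * eLpNorm F q μ := by
  have hvs : AEStronglyMeasurable (fun x => ‖v x‖ ^ s) μ :=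
    (hv.norm.aemeasurable.pow_const s).aestronglyMeasurable
  calc eLpNorm (fun x => |v x| ^ s * F x) r μ = eLpNorm ((fun x => ‖v x‖ ^ s) • F) r μ := rfl
    _ ≤ eLpNorm (fun x => ‖v x‖ ^ s) p μ * eLpNorm F q μ := eLpNorm_smul_le_mul_eLpNorm hF hvs
    _ = _ := by rw [eLpNorm_norm_rpow v hs]

/-- If `a_{3/4} := sign(a)|a|^{3/4} ∈ L²(ℝ³)` with `∇a_{3/4} ∈ L²(ℝ³)`, then
`‖∇a‖_{L^{3/2}} ≤ C ‖∇a_{3/4}‖_{L²} ‖a_{3/4}‖_{L²}^{1/3}`. -/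
theorem stmt4 :
    ∃ C : ℝ≥0, 0 < C ∧ ∀ a : (Fin 3 → ℝ) → ℝ,
      Differentiable ℝ a → Differentiable ℝ (aPow34 a) →
      MemLp (aPow34 a) 2 volume →
      MemLp (fun x => ‖fderiv ℝ (aPow34 a) x‖) 2 volume →
      eLpNorm (fun x => ‖fderiv ℝ a x‖) (ENNReal.ofReal (3/2)) volume
        ≤ C * eLpNorm (fun x => ‖fderiv ℝ (aPow34 a) x‖) 2 volume
            * (eLpNorm (aPow34 a) 2 volume) ^ ((1:ℝ)/3) := by
  refine ⟨4 / 3, by norm_num, fun a _ hdiff _ hgrad => ?_⟩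
  have : HolderTriple 6 2 (ENNReal.ofReal (3 / 2)) := by
    rw [holderTriple_iff, ← ENNReal.ofReal_ofNat 6, ← ENNReal.ofReal_ofNat 2,
      ← ENNReal.ofReal_inv_of_pos (by norm_num), ← ENNReal.ofReal_inv_of_pos (by norm_num),
      ← ENNReal.ofReal_inv_of_pos (by norm_num), ← ENNReal.ofReal_add (by norm_num) (by norm_num)]
    norm_num
  have hexp : (6 : ℝ≥0∞) * ENNReal.ofReal (1 / 3) = 2 := by
    rw [← ENNReal.ofReal_ofNat 6, ← ENNReal.ofReal_mul (by norm_num)]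
    norm_num
  calc eLpNorm (fun x => ‖fderiv ℝ a x‖) (ENNReal.ofReal (3 / 2)) volume
      = ‖(4 / 3 : ℝ)‖ₑ * eLpNorm (fun x => |aPow34 a x| ^ (1 / 3 : ℝ) *
          ‖fderiv ℝ (aPow34 a) x‖) (ENNReal.ofReal (3 / 2)) volume := by
        rw [← eLpNorm_const_smul, funext (norm_fderiv_eq_norm_fderiv_aPow34 hdiff)]; rfl
    _ ≤ ‖(4 / 3 : ℝ)‖ₑ * (eLpNorm (aPow34 a) 2 volume ^ (1 / 3 : ℝ) *
          eLpNorm (fun x => ‖fderiv ℝ (aPow34 a) x‖) 2 volume) := by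
        gcongr
        simpa only [hexp] using eLpNorm_abs_rpow_mul_le (p := 6) (q := 2)
          hdiff.continuous.aestronglyMeasurable hgrad.1 (by norm_num : (0 : ℝ) < 1 / 3)
    _ = _ := by
        rw [show ‖(4 / 3 : ℝ)‖ₑ = ((4 / 3 : ℝ≥0) : ℝ≥0∞) by simp [enorm]]
        ring
end
end

section
/- Let (s, α) ∈ (0,1)² and (p, q) ∈ [1,∞]². Let G : ℝ → ℝ be Hölder continuous of exponent α with constant ‖G‖_{C^α} = sup_{r≠r'} |G(r)−G(r')|/|r−r'|^α, and G(0) = 0. Then for any a in the homogeneous Besov space B^s_{p,q}(ℝ^d), the composition G(a) belongs to B^{αs}_{p/α, q/α} and ‖G(a)‖_{B^{αs}_{p/α, q/α}} ≤ C ‖G‖_{C^α} ‖a‖_{B^s_{p,q}}^α. -/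
/-! Hölder continuity gives `|G(a x) − G(a (x+y))| ≤ K |a x − a (x+y)|^α` pointwise, hence
`‖Δ_y G(a)‖_{L^{p/α}} ≤ K ‖Δ_y a‖_{L^p}^α`. Since `|y|^{αs} = (|y|^s)^α`, the difference quotients
obey the same bound, and the outer `L^{q/α}(dy/|y|^d)` norm of an `α`-th power is the `α`-th power
of the outer `L^q` norm; so the estimate holds with `C = 1`. -/

open MeasureTheory ENNReal
open scoped NNReal

noncomputable section

/-- Homogeneous Besov norm `B^σ_{r,m}(ℝ^d)` (for `0 < σ < 1`) characterized by finite
differences: `( ∫ (‖f − f(·+y)‖_{L^r} / |y|^σ)^m dy/|y|^d )^{1/m}`, with the essential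
supremum modification when `m = ∞`. -/
def besovDiff (d : ℕ) (σ : ℝ) (r m : ℝ≥0∞) (f : EuclideanSpace ℝ (Fin d) → ℝ) : ℝ≥0∞ :=
  if m = ∞ then
    essSup (fun y : EuclideanSpace ℝ (Fin d) =>
      eLpNorm (fun x => f x - f (x + y)) r volume / ENNReal.ofReal (‖y‖ ^ σ)) volume
  else
    (∫⁻ y : EuclideanSpace ℝ (Fin d),
        (eLpNorm (fun x => f x - f (x + y)) r volume / ENNReal.ofReal (‖y‖ ^ σ)) ^ m.toReal
          / ENNReal.ofReal (‖y‖ ^ (d:ℝ))) ^ (1 / m.toReal)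

/-- The `L^m(w⁻¹ μ)` norm of `F`; for `m = ∞` the weight is ignored, as in the outer norm of
`besovDiff`. -/
def weightedLpNorm {Y : Type*} [MeasurableSpace Y] (μ : Measure Y) (w : Y → ℝ≥0∞) (m : ℝ≥0∞)
    (F : Y → ℝ≥0∞) : ℝ≥0∞ :=
  if m = ∞ then essSup F μ else (∫⁻ y, F y ^ m.toReal / w y ∂μ) ^ (1 / m.toReal)

theorem besovDiff_eq_weightedLpNorm (d : ℕ) (σ : ℝ) (r m : ℝ≥0∞)
    (f : EuclideanSpace ℝ (Fin d) → ℝ) :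
    besovDiff d σ r m f = weightedLpNorm volume (fun y => ENNReal.ofReal (‖y‖ ^ (d : ℝ))) m
      (fun y => eLpNorm (fun x => f x - f (x + y)) r volume / ENNReal.ofReal (‖y‖ ^ σ)) :=
  rfl

section WeightedLpNorm

variable {Y : Type*} [MeasurableSpace Y] {μ : Measure Y} {w : Y → ℝ≥0∞} {α : ℝ} {K : ℝ≥0∞}
  {F H : Y → ℝ≥0∞}

theorem essSup_le_mul_rpow_of_le (hα : 0 < α) (h : ∀ y, F y ≤ K * H y ^ α) :
    essSup F μ ≤ K * essSup H μ ^ α :=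
  calc essSup F μ ≤ essSup (fun y => K * H y ^ α) μ := essSup_mono_ae (.of_forall h)
    _ = K * essSup H μ ^ α := by
      rw [essSup_const_mul]
      exact congrArg (K * ·) ((orderIsoRpow α hα).essSup_apply H μ).symm

theorem lintegral_rpow_div_le_mul_rpow_of_le (hα : 0 < α) {m : ℝ} (hm : 0 < m)
    (hK : K ≠ ∞) (h : ∀ y, F y ≤ K * H y ^ α) :
    (∫⁻ y, F y ^ (m / α) / w y ∂μ) ^ (1 / (m / α))
      ≤ K * ((∫⁻ y, H y ^ m / w y ∂μ) ^ (1 / m)) ^ α := by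
  have hmα : 0 < m / α := div_pos hm hα
  have hpointwise : ∀ y, F y ^ (m / α) / w y ≤ K ^ (m / α) * (H y ^ m / w y) := fun y => by
    rw [← mul_div_assoc]
    gcongr
    calc F y ^ (m / α) ≤ (K * H y ^ α) ^ (m / α) := by gcongr; exact h y
      _ = K ^ (m / α) * H y ^ m := by
        rw [ENNReal.mul_rpow_of_nonneg _ _ hmα.le, ← ENNReal.rpow_mul, mul_div_cancel₀ _ hα.ne']
  calc (∫⁻ y, F y ^ (m / α) / w y ∂μ) ^ (1 / (m / α))
      ≤ (K ^ (m / α) * ∫⁻ y, H y ^ m / w y ∂μ) ^ (1 / (m / α)) := by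
        rw [← lintegral_const_mul' _ _ (ENNReal.rpow_ne_top_of_nonneg hmα.le hK)]
        gcongr with y
        exact hpointwise y
    _ = K * ((∫⁻ y, H y ^ m / w y ∂μ) ^ (1 / m)) ^ α := by
      rw [ENNReal.mul_rpow_of_nonneg _ _ (by positivity), ← ENNReal.rpow_mul,
        ← ENNReal.rpow_mul, mul_one_div_cancel hmα.ne', ENNReal.rpow_one, one_div_div,
        one_div_mul_eq_div]

theorem weightedLpNorm_le_mul_rpow_of_le (hα : 0 < α) {m : ℝ≥0∞} (hm : m ≠ 0) (hK : K ≠ ∞)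
    (h : ∀ y, F y ≤ K * H y ^ α) :
    weightedLpNorm μ w (m / ENNReal.ofReal α) F ≤ K * weightedLpNorm μ w m H ^ α := by
  have hα0 : ENNReal.ofReal α ≠ 0 := by simpa using hα
  rcases eq_or_ne m ∞ with rfl | hm_top
  · simpa [weightedLpNorm, ENNReal.top_div_of_ne_top ENNReal.ofReal_ne_top]
      using essSup_le_mul_rpow_of_le hα h
  · have hm_div_top : m / ENNReal.ofReal α ≠ ∞ := ENNReal.div_ne_top hm_top hα0
    have hm_toReal : (m / ENNReal.ofReal α).toReal = m.toReal / α := by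
      rw [ENNReal.toReal_div, ENNReal.toReal_ofReal hα.le]
    rw [weightedLpNorm, weightedLpNorm, if_neg hm_div_top, if_neg hm_top, hm_toReal]
    exact lintegral_rpow_div_le_mul_rpow_of_le hα (ENNReal.toReal_pos hm hm_top) hK h

end WeightedLpNorm

theorem eLpNorm_comp_sub_comp_le_of_holder {X : Type*} [MeasurableSpace X] {μ : Measure X}
    {K : ℝ≥0} {α : ℝ} (hα : 0 < α) {G : ℝ → ℝ} (hG : ∀ r r', |G r - G r'| ≤ K * |r - r'| ^ α)
    (u v : X → ℝ) (p : ℝ≥0∞) :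
    eLpNorm (fun x => G (u x) - G (v x)) (p / ENNReal.ofReal α) μ
      ≤ K * eLpNorm (fun x => u x - v x) p μ ^ α := by
  have hα0 : ENNReal.ofReal α ≠ 0 := by simpa using hα
  calc eLpNorm (fun x => G (u x) - G (v x)) (p / ENNReal.ofReal α) μ
      ≤ eLpNorm ((K : ℝ) • fun x => ‖u x - v x‖ ^ α) (p / ENNReal.ofReal α) μ := by
        refine eLpNorm_mono fun x => ?_
        simp only [Pi.smul_apply, smul_eq_mul, Real.norm_eq_abs]
        exact (hG _ _).trans (le_abs_self _)
    _ = K * eLpNorm (fun x => u x - v x) p μ ^ α := by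
      rw [eLpNorm_const_smul, eLpNorm_norm_rpow _ hα,
        ENNReal.div_mul_cancel hα0 ENNReal.ofReal_ne_top, enorm_eq_nnnorm]
      simp

theorem ofReal_rpow_mul_eq_ofReal_rpow_rpow {t : ℝ} (ht : 0 ≤ t) {α : ℝ} (hα : 0 ≤ α) (s : ℝ) :
    ENNReal.ofReal (t ^ (α * s)) = ENNReal.ofReal (t ^ s) ^ α := by
  rw [ENNReal.ofReal_rpow_of_nonneg (Real.rpow_nonneg ht _) hα, ← Real.rpow_mul ht, mul_comm]

theorem stmt7_general (d : ℕ) (s α : ℝ)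
    (hα : 0 < α) (p q : ℝ≥0∞) (hq : 1 ≤ q) :
    ∃ C : ℝ≥0, 0 < C ∧ ∀ (K : ℝ≥0) (G : ℝ → ℝ),
      (∀ r r' : ℝ, |G r - G r'| ≤ K * |r - r'| ^ α) → G 0 = 0 →
      ∀ f : EuclideanSpace ℝ (Fin d) → ℝ,
        besovDiff d (α * s) (p / ENNReal.ofReal α) (q / ENNReal.ofReal α)
            (fun x => G (f x))
          ≤ C * K * (besovDiff d s p q f) ^ α := by
  refine ⟨1, one_pos, fun K G hG _ f => ?_⟩
  have hquotient : ∀ y : EuclideanSpace ℝ (Fin d),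
      eLpNorm (fun x => G (f x) - G (f (x + y))) (p / ENNReal.ofReal α) volume
          / ENNReal.ofReal (‖y‖ ^ (α * s))
        ≤ K * (eLpNorm (fun x => f x - f (x + y)) p volume / ENNReal.ofReal (‖y‖ ^ s)) ^ α :=
    fun y => by
      rw [ofReal_rpow_mul_eq_ofReal_rpow_rpow (norm_nonneg y) hα.le,
        ENNReal.div_rpow_of_nonneg _ _ hα.le, ← mul_div_assoc]
      gcongr
      exact eLpNorm_comp_sub_comp_le_of_holder hα hG _ _ p
  rw [ENNReal.coe_one, one_mul, besovDiff_eq_weightedLpNorm, besovDiff_eq_weightedLpNorm]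
  exact weightedLpNorm_le_mul_rpow_of_le hα (zero_lt_one.trans_le hq).ne' ENNReal.coe_ne_top
    hquotient

/-- Hölder continuous functions of exponent `α` (with `G(0)=0`) act on homogeneous Besov
spaces: for `(s,α) ∈ (0,1)²` and `(p,q) ∈ [1,∞]²`,
`‖G(a)‖_{B^{αs}_{p/α, q/α}} ≤ C ‖G‖_{C^α} ‖a‖_{B^s_{p,q}}^α`. -/
theorem stmt7 (d : ℕ) (hd : 0 < d) (s α : ℝ) (hs : 0 < s) (hs1 : s < 1)
    (hα : 0 < α) (hα1 : α < 1) (p q : ℝ≥0∞) (hp : 1 ≤ p) (hq : 1 ≤ q) :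
    ∃ C : ℝ≥0, 0 < C ∧ ∀ (K : ℝ≥0) (G : ℝ → ℝ),
      (∀ r r' : ℝ, |G r - G r'| ≤ K * |r - r'| ^ α) → G 0 = 0 →
      ∀ f : EuclideanSpace ℝ (Fin d) → ℝ,
        besovDiff d (α * s) (p / ENNReal.ofReal α) (q / ENNReal.ofReal α)
            (fun x => G (f x))
          ≤ C * K * (besovDiff d s p q f) ^ α :=
  stmt7_general d s α hα p q hq
end
end

section
/- Let (α, θ) ∈ (0, 1/2)². For any tempered distribution a on ℝ³ with a ∈ H_θ and ∇a ∈ H_θ (componentwise), one has ‖a‖_{(B⁰_{2,1})_h (B^{1/2−α}_{2,1})_v} ≤ C ‖a‖_{H_θ}^{α} ‖∇a‖_{H_θ}^{1−α}. -/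
/-!
On the support of the block `Δ^h_k Δ^v_ℓ` one has `|ξ_h| ≈ 2^k`, `|ξ₃| ≈ 2^ℓ` and
`|ξ| ≳ 2^{max(k,ℓ)}`, so with `s = k(1/2 - θ) + ℓθ` the block is bounded both by `2^s ‖a‖_{H_θ}`
and by `2^{s - max(k,ℓ)} ‖∇a‖_{H_θ}`. After the weight `2^{ℓ(1/2-α)}` the smaller bound is at most
`2^{-c|k-ℓ|} m(max(k,ℓ))`, where `c = min(1/2 - θ, 1/2 - α + θ) > 0` and
`m(n) = min(2^{n(1-α)} ‖a‖_{H_θ}, 2^{-nα} ‖∇a‖_{H_θ})`. Summing the geometric factor in `|k - ℓ|`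
leaves `Σ_n m(n)`; split at the `n` where the two terms of `m` balance, this is two geometric series,
each `≲ ‖a‖_{H_θ}^α ‖∇a‖_{H_θ}^{1-α}`.
-/

open MeasureTheory ENNReal
open scoped NNReal

noncomputable section

/-- The `L²` norm of the anisotropic Littlewood–Paley block `Δ^h_k Δ^v_ℓ a`, computed on the
Fourier side (by Plancherel) with dyadic cutoff profile `φ` and `A = â`. -/
def blockL2 (φ : ℝ → ℝ) (k ℓ : ℤ) (A : (Fin 3 → ℝ) → ℂ) : ℝ≥0∞ :=
  (∫⁻ ξ, ENNReal.ofReal ((φ ((2:ℝ) ^ (-k) * hmod ξ)) ^ 2 * (φ ((2:ℝ) ^ (-ℓ) * |ξ 2|)) ^ 2)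
      * (‖A ξ‖₊ : ℝ≥0∞) ^ 2) ^ ((1:ℝ)/2)

namespace AnisotropicBesov

theorem tsum_two_rpow_neg_mul_natCast (c : ℝ) :
    ∑' n : ℕ, (2 : ℝ≥0∞) ^ (-(c * n)) = (1 - 2 ^ (-c))⁻¹ := by
  rw [← ENNReal.tsum_geometric]
  congr 1 with n
  rw [← ENNReal.rpow_natCast, ← ENNReal.rpow_mul, neg_mul]

theorem tsum_int_two_rpow_neg_mul_abs_le {c : ℝ} (hc : 0 ≤ c) :
    ∑' d : ℤ, (2 : ℝ≥0∞) ^ (-(c * |(d : ℝ)|)) ≤ 2 * (1 - 2 ^ (-c))⁻¹ := by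
  rw [tsum_of_nat_of_neg_add_one ENNReal.summable ENNReal.summable, two_mul,
    ← tsum_two_rpow_neg_mul_natCast]
  refine add_le_add (le_of_eq ?_) (ENNReal.tsum_le_tsum fun n ↦ ?_)
  · simp
  · refine ENNReal.rpow_le_rpow_of_exponent_le one_le_two ?_
    have : |((-(n + 1) : ℤ) : ℝ)| = n + 1 := by
      push_cast
      rw [abs_neg, abs_of_nonneg (by positivity)]
    rw [this]
    nlinarith

def dyadicSumBound (c : ℝ) : ℝ≥0∞ := 2 ^ c * (2 * (1 - 2 ^ (-c))⁻¹)

theorem dyadicSumBound_ne_zero (c : ℝ) : dyadicSumBound c ≠ 0 := by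
  simp [dyadicSumBound, ENNReal.rpow_eq_zero_iff]

theorem dyadicSumBound_ne_top {c : ℝ} (hc : 0 < c) : dyadicSumBound c ≠ ⊤ := by
  have h : (2 : ℝ≥0∞) ^ (-c) < 1 :=
    ENNReal.rpow_lt_one_of_one_lt_of_neg one_lt_two (neg_neg_of_pos hc)
  refine ENNReal.mul_ne_top (by simp) (ENNReal.mul_ne_top (by simp) ?_)
  exact ENNReal.inv_ne_top.mpr (tsub_pos_of_lt h).ne'

theorem tsum_int_two_rpow_neg_mul_abs_sub_le {c : ℝ} (hc : 0 ≤ c) (x : ℝ) :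
    ∑' n : ℤ, (2 : ℝ≥0∞) ^ (-(c * |n - x|)) ≤ dyadicSumBound c := by
  have hshift : ∀ n : ℤ,
      (2 : ℝ≥0∞) ^ (-(c * |n - x|)) ≤ 2 ^ c * 2 ^ (-(c * |((n - ⌊x⌋ : ℤ) : ℝ)|)) := by
    intro n
    rw [← ENNReal.rpow_add _ _ two_ne_zero ENNReal.ofNat_ne_top]
    refine ENNReal.rpow_le_rpow_of_exponent_le one_le_two ?_
    have h1 : |((n - ⌊x⌋ : ℤ) : ℝ)| ≤ |n - x| + 1 := by
      push_cast
      calc |(n : ℝ) - ⌊x⌋| ≤ |n - x| + |x - ⌊x⌋| := abs_sub_le _ _ _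
        _ ≤ |n - x| + 1 := by
          rw [← Int.fract, abs_of_nonneg (Int.fract_nonneg x)]
          linarith [Int.fract_lt_one x]
    nlinarith
  calc ∑' n : ℤ, (2 : ℝ≥0∞) ^ (-(c * |n - x|))
      ≤ ∑' n : ℤ, 2 ^ c * 2 ^ (-(c * |((n - ⌊x⌋ : ℤ) : ℝ)|)) := ENNReal.tsum_le_tsum hshift
    _ = 2 ^ c * ∑' d : ℤ, 2 ^ (-(c * |(d : ℝ)|)) := by
      rw [ENNReal.tsum_mul_left]
      exact congrArg _ ((Equiv.subRight ⌊x⌋).tsum_eq fun d : ℤ ↦ (2 : ℝ≥0∞) ^ (-(c * |(d : ℝ)|)))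
    _ ≤ dyadicSumBound c := by
      unfold dyadicSumBound
      gcongr
      exact tsum_int_two_rpow_neg_mul_abs_le hc

theorem exists_eq_two_rpow {P : ℝ≥0∞} (h0 : P ≠ 0) (htop : P ≠ ⊤) : ∃ x : ℝ, P = 2 ^ x := by
  refine ⟨Real.logb 2 P.toReal, ?_⟩
  rw [← ENNReal.ofReal_ofNat, ENNReal.ofReal_rpow_of_pos two_pos,
    Real.rpow_logb two_pos (by norm_num) (ENNReal.toReal_pos h0 htop), ENNReal.ofReal_toReal htop]

theorem min_two_rpow_le {a b : ℝ} (hab : a + b = 1) (n x y : ℝ) :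
    min ((2 : ℝ≥0∞) ^ (n * a + x)) (2 ^ (-(n * b) + y))
      ≤ 2 ^ (-(min a b * |n - (y - x)|) + (b * x + a * y)) := by
  have hb : b = 1 - a := by linarith
  subst hb
  rcases le_total n (y - x) with h | h
  · refine (min_le_left _ _).trans (ENNReal.rpow_le_rpow_of_exponent_le one_le_two ?_)
    rw [abs_of_nonpos (by linarith)]
    nlinarith [min_le_left a (1 - a)]
  · refine (min_le_right _ _).trans (ENNReal.rpow_le_rpow_of_exponent_le one_le_two ?_)
    rw [abs_of_nonneg (by linarith)]
    nlinarith [min_le_right a (1 - a)]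

theorem tsum_min_two_rpow_mul_le {a b : ℝ} (ha : 0 < a) (hb : 0 < b) (hab : a + b = 1)
    (P Q : ℝ≥0∞) :
    ∑' n : ℤ, min (2 ^ (n * a) * P) (2 ^ (-(n * b)) * Q)
      ≤ dyadicSumBound (min a b) * (P ^ b * Q ^ a) := by
  rcases eq_or_ne P 0 with rfl | hP0
  · simp
  rcases eq_or_ne Q 0 with rfl | hQ0
  · simp
  rcases eq_or_ne P ⊤ with rfl | hPtop
  · simp [ENNReal.top_rpow_of_pos hb, ENNReal.mul_top, dyadicSumBound_ne_zero,
      ENNReal.rpow_eq_zero_iff, hQ0, ha.not_gt]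
  rcases eq_or_ne Q ⊤ with rfl | hQtop
  · simp [ENNReal.top_rpow_of_pos ha, ENNReal.mul_top, dyadicSumBound_ne_zero,
      ENNReal.rpow_eq_zero_iff, hP0, hb.not_gt]
  obtain ⟨x, rfl⟩ := exists_eq_two_rpow hP0 hPtop
  obtain ⟨y, rfl⟩ := exists_eq_two_rpow hQ0 hQtop
  calc ∑' n : ℤ, min (2 ^ (n * a) * 2 ^ x) (2 ^ (-(n * b)) * 2 ^ y)
      ≤ ∑' n : ℤ, 2 ^ (-(min a b * |n - (y - x)|)) * (2 : ℝ≥0∞) ^ (b * x + a * y) := by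
        refine ENNReal.tsum_le_tsum fun n ↦ ?_
        simp only [← ENNReal.rpow_add _ _ two_ne_zero ENNReal.ofNat_ne_top]
        exact min_two_rpow_le hab n x y
    _ ≤ dyadicSumBound (min a b) * ((2 ^ x) ^ b * (2 ^ y) ^ a) := by
        rw [ENNReal.tsum_mul_right, ← ENNReal.rpow_mul, ← ENNReal.rpow_mul,
          ← ENNReal.rpow_add _ _ two_ne_zero ENNReal.ofNat_ne_top, mul_comm x, mul_comm y]
        gcongr
        exact tsum_int_two_rpow_neg_mul_abs_sub_le (le_min ha.le hb.le) _

theorem tsum_tsum_two_rpow_neg_mul_abs_sub_mul_max_le {c : ℝ} (hc : 0 ≤ c) (f : ℤ → ℝ≥0∞) :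
    ∑' k : ℤ, ∑' ℓ : ℤ, (2 : ℝ≥0∞) ^ (-(c * |(k : ℝ) - ℓ|)) * f (max k ℓ)
      ≤ 2 * dyadicSumBound c * ∑' n, f n := by
  have hrow : ∀ k : ℤ, ∑' ℓ : ℤ, (2 : ℝ≥0∞) ^ (-(c * |(k : ℝ) - ℓ|)) ≤ dyadicSumBound c := by
    intro k
    simp_rw [abs_sub_comm (k : ℝ)]
    exact tsum_int_two_rpow_neg_mul_abs_sub_le hc k
  have hmax : ∀ k ℓ : ℤ, f (max k ℓ) ≤ f k + f ℓ := fun k ℓ ↦ by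
    rcases max_choice k ℓ with h | h <;> rw [h]
    exacts [le_self_add, le_add_self]
  calc ∑' k : ℤ, ∑' ℓ : ℤ, (2 : ℝ≥0∞) ^ (-(c * |(k : ℝ) - ℓ|)) * f (max k ℓ)
      ≤ ∑' k : ℤ, ∑' ℓ : ℤ, (2 ^ (-(c * |(k : ℝ) - ℓ|)) * f k
          + 2 ^ (-(c * |(k : ℝ) - ℓ|)) * f ℓ) := by
        gcongr with k ℓ
        rw [← mul_add]
        exact mul_le_mul_right (hmax k ℓ) _
    _ = ∑' k : ℤ, (∑' ℓ : ℤ, (2 : ℝ≥0∞) ^ (-(c * |(k : ℝ) - ℓ|))) * f k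
          + ∑' ℓ : ℤ, (∑' k : ℤ, (2 : ℝ≥0∞) ^ (-(c * |(k : ℝ) - ℓ|))) * f ℓ := by
        simp_rw [ENNReal.tsum_add, ENNReal.tsum_mul_right]
        rw [ENNReal.tsum_comm (f := fun k ℓ : ℤ ↦ (2 : ℝ≥0∞) ^ (-(c * |(k : ℝ) - ℓ|)) * f ℓ)]
        simp_rw [ENNReal.tsum_mul_right]
    _ ≤ ∑' k : ℤ, dyadicSumBound c * f k + ∑' ℓ : ℤ, dyadicSumBound c * f ℓ := by
        gcongr with k ℓ
        exacts [hrow k, tsum_int_two_rpow_neg_mul_abs_sub_le hc ℓ]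
    _ = 2 * dyadicSumBound c * ∑' n, f n := by
        rw [ENNReal.tsum_mul_left, ← two_mul, mul_assoc]

theorem ofReal_two_rpow (t : ℝ) : ENNReal.ofReal ((2:ℝ) ^ t) = 2 ^ t := by
  rw [← ENNReal.ofReal_rpow_of_pos two_pos, ENNReal.ofReal_ofNat]

section Blocks

variable {φ : ℝ → ℝ}

theorem mem_dyadic_annulus_of_ne_zero (hφsupp : ∀ τ : ℝ, (|τ| < 3/4 ∨ 8/3 < |τ|) → φ τ = 0)
    {n : ℤ} {x : ℝ} (hx : 0 ≤ x) (h : φ ((2:ℝ) ^ (-n) * x) ≠ 0) :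
    3/4 * (2:ℝ) ^ (n : ℝ) ≤ x ∧ x ≤ 8/3 * (2:ℝ) ^ (n : ℝ) := by
  have hpos : (0:ℝ) < 2 ^ n := zpow_pos two_pos n
  have hτ := mt (hφsupp _) h
  push Not at hτ
  rw [abs_of_nonneg (by positivity), zpow_neg] at hτ
  rw [Real.rpow_intCast, mul_comm _ (2 ^ n), mul_comm _ (2 ^ n), ← le_inv_mul_iff₀ hpos,
    ← inv_mul_le_iff₀ hpos]
  exact hτ

theorem three_eighths_mul_two_rpow_le_rpow {n x e : ℝ} (hx : 0 < x)
    (hxn : x ≤ 8/3 * (2:ℝ) ^ n) (he : -1 ≤ e) (he' : e ≤ 0) :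
    3/8 * (2:ℝ) ^ (n * e) ≤ x ^ e := by
  have h83 : (3/8 : ℝ) ≤ (8/3) ^ e := by
    calc (3/8 : ℝ) = (8/3) ^ (-1 : ℝ) := by norm_num
      _ ≤ (8/3) ^ e := Real.rpow_le_rpow_of_exponent_le (by norm_num) he
  calc 3/8 * (2:ℝ) ^ (n * e) ≤ (8/3) ^ e * ((2:ℝ) ^ n) ^ e := by
        rw [← Real.rpow_mul two_pos.le]
        gcongr
    _ = (8/3 * (2:ℝ) ^ n) ^ e := (Real.mul_rpow (by norm_num) (by positivity)).symm
    _ ≤ x ^ e := Real.rpow_le_rpow_of_nonpos hx hxn he'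

theorem hmod_le_fmod (ξ : Fin 3 → ℝ) : hmod ξ ≤ fmod ξ :=
  Real.sqrt_le_sqrt (le_add_of_nonneg_right (sq_nonneg _))

theorem abs_le_fmod (ξ : Fin 3 → ℝ) : |ξ 2| ≤ fmod ξ := by
  rw [← Real.sqrt_sq_eq_abs]
  exact Real.sqrt_le_sqrt (le_add_of_nonneg_left (by positivity))

variable {k ℓ : ℤ} {ξ : Fin 3 → ℝ}

theorem hThetaWeight_ge (hφsupp : ∀ τ : ℝ, (|τ| < 3/4 ∨ 8/3 < |τ|) → φ τ = 0)
    (hk : φ ((2:ℝ) ^ (-k) * hmod ξ) ≠ 0) (hℓ : φ ((2:ℝ) ^ (-ℓ) * |ξ 2|) ≠ 0)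
    {θ : ℝ} (hθ0 : 0 ≤ θ) (hθ : θ ≤ 1/2) :
    9/64 * (2:ℝ) ^ (-(2 * (k * (1/2 - θ) + ℓ * θ)))
      ≤ hmod ξ ^ (-1 + 2*θ) * |ξ 2| ^ (-(2*θ)) := by
  obtain ⟨hk₁, hk₂⟩ := mem_dyadic_annulus_of_ne_zero hφsupp (Real.sqrt_nonneg _) hk
  obtain ⟨hℓ₁, hℓ₂⟩ := mem_dyadic_annulus_of_ne_zero hφsupp (abs_nonneg _) hℓ
  have hwk := three_eighths_mul_two_rpow_le_rpow (lt_of_lt_of_le (by positivity) hk₁) hk₂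
    (e := -1 + 2*θ) (by linarith) (by linarith)
  have hwℓ := three_eighths_mul_two_rpow_le_rpow (lt_of_lt_of_le (by positivity) hℓ₁) hℓ₂
    (e := -(2*θ)) (by linarith) (by linarith)
  calc 9/64 * (2:ℝ) ^ (-(2 * (k * (1/2 - θ) + ℓ * θ)))
      = (3/8 * (2:ℝ) ^ (k * (-1 + 2*θ))) * (3/8 * (2:ℝ) ^ (ℓ * (-(2*θ)))) := by
        rw [mul_mul_mul_comm, ← Real.rpow_add two_pos]
        ring_nf
    _ ≤ hmod ξ ^ (-1 + 2*θ) * |ξ 2| ^ (-(2*θ)) :=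
        mul_le_mul hwk hwℓ (by positivity) (le_trans (by positivity) hwk)

theorem three_fourths_mul_two_rpow_max_le_fmod
    (hφsupp : ∀ τ : ℝ, (|τ| < 3/4 ∨ 8/3 < |τ|) → φ τ = 0)
    (hk : φ ((2:ℝ) ^ (-k) * hmod ξ) ≠ 0) (hℓ : φ ((2:ℝ) ^ (-ℓ) * |ξ 2|) ≠ 0) :
    3/4 * (2:ℝ) ^ ((max k ℓ : ℤ) : ℝ) ≤ fmod ξ := by
  rcases max_choice k ℓ with h | h <;> rw [h]
  · exact (mem_dyadic_annulus_of_ne_zero hφsupp (Real.sqrt_nonneg _) hk).1.trans (hmod_le_fmod ξ)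
  · exact (mem_dyadic_annulus_of_ne_zero hφsupp (abs_nonneg _) hℓ).1.trans (abs_le_fmod ξ)

theorem blockL2_le_of_weight (hφbd : ∀ τ : ℝ, |φ τ| ≤ 1) {t : ℝ} {w : (Fin 3 → ℝ) → ℝ}
    (hw : ∀ ξ, φ ((2:ℝ) ^ (-k) * hmod ξ) ≠ 0 → φ ((2:ℝ) ^ (-ℓ) * |ξ 2|) ≠ 0 →
      (2:ℝ) ^ (-(2 * t)) ≤ 16 * w ξ)
    (A : (Fin 3 → ℝ) → ℂ) :
    blockL2 φ k ℓ A
      ≤ 4 * 2 ^ t * (∫⁻ ξ, ENNReal.ofReal (w ξ) * (‖A ξ‖₊ : ℝ≥0∞) ^ 2) ^ ((1:ℝ)/2) := by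
  have hpt : ∀ ξ, ENNReal.ofReal ((φ ((2:ℝ) ^ (-k) * hmod ξ)) ^ 2 * (φ ((2:ℝ) ^ (-ℓ) * |ξ 2|)) ^ 2)
      ≤ ENNReal.ofReal (16 * (2:ℝ) ^ (2 * t)) * ENNReal.ofReal (w ξ) := by
    intro ξ
    by_cases h : φ ((2:ℝ) ^ (-k) * hmod ξ) = 0 ∨ φ ((2:ℝ) ^ (-ℓ) * |ξ 2|) = 0
    · rcases h with h | h <;> rw [h] <;> simp
    push Not at h
    rw [← ENNReal.ofReal_mul (by positivity)]
    refine ENNReal.ofReal_le_ofReal ?_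
    have hφ₁ := hφbd ((2:ℝ) ^ (-k) * hmod ξ)
    have hφ₂ := hφbd ((2:ℝ) ^ (-ℓ) * |ξ 2|)
    have hone : (2:ℝ) ^ (2 * t) * 2 ^ (-(2 * t)) = 1 := by
      rw [← Real.rpow_add two_pos, add_neg_cancel, Real.rpow_zero]
    have h2t : (0:ℝ) ≤ 2 ^ (2 * t) := by positivity
    have hsq : (φ ((2:ℝ) ^ (-k) * hmod ξ)) ^ 2 * (φ ((2:ℝ) ^ (-ℓ) * |ξ 2|)) ^ 2 ≤ 1 := by
      rw [← mul_pow, ← sq_abs, abs_mul]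
      exact pow_le_one₀ (by positivity) (mul_le_one₀ hφ₁ (abs_nonneg _) hφ₂)
    nlinarith [hw ξ h.1 h.2]
  have hconst : ENNReal.ofReal (16 * (2:ℝ) ^ (2 * t)) ^ ((1:ℝ)/2) = 4 * 2 ^ t := by
    have hsq : 16 * (2:ℝ) ^ (2 * t) = (4 * 2 ^ t) ^ 2 := by
      rw [mul_pow, ← Real.rpow_mul_natCast two_pos.le, mul_comm t]
      norm_num
    rw [hsq, ENNReal.ofReal_pow (by positivity), show (1:ℝ)/2 = ((2:ℕ) : ℝ)⁻¹ by norm_num,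
      ENNReal.pow_rpow_inv_natCast two_ne_zero, ENNReal.ofReal_mul (by norm_num),
      ofReal_two_rpow, ENNReal.ofReal_ofNat]
  calc blockL2 φ k ℓ A
      ≤ (∫⁻ ξ, ENNReal.ofReal (16 * (2:ℝ) ^ (2 * t)) *
          (ENNReal.ofReal (w ξ) * (‖A ξ‖₊ : ℝ≥0∞) ^ 2)) ^ ((1:ℝ)/2) := by
        refine ENNReal.rpow_le_rpow (lintegral_mono fun ξ ↦ ?_) (by norm_num)
        rw [← mul_assoc]
        exact mul_le_mul_left (hpt ξ) _
    _ = 4 * 2 ^ t * (∫⁻ ξ, ENNReal.ofReal (w ξ) * (‖A ξ‖₊ : ℝ≥0∞) ^ 2) ^ ((1:ℝ)/2) := by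
        rw [lintegral_const_mul' _ _ ENNReal.ofReal_ne_top,
          ENNReal.mul_rpow_of_nonneg _ _ (by norm_num), hconst]

end Blocks

/-- `‖a‖²_{H_θ}` on the Fourier side, `A = â`. -/
def hThetaNormSq (θ : ℝ) (A : (Fin 3 → ℝ) → ℂ) : ℝ≥0∞ :=
  ∫⁻ ξ, ENNReal.ofReal (hmod ξ ^ (-1 + 2*θ) * |ξ 2| ^ (-(2*θ))) * (‖A ξ‖₊ : ℝ≥0∞) ^ 2

/-- `‖∇a‖²_{H_θ}` on the Fourier side: by Plancherel `∇a` contributes the factor `|ξ|²`. -/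
def hThetaGradNormSq (θ : ℝ) (A : (Fin 3 → ℝ) → ℂ) : ℝ≥0∞ :=
  ∫⁻ ξ, ENNReal.ofReal (hmod ξ ^ (-1 + 2*θ) * |ξ 2| ^ (-(2*θ)) * fmod ξ ^ 2)
    * (‖A ξ‖₊ : ℝ≥0∞) ^ 2

theorem blockL2_le_min {θ : ℝ} (hθ0 : 0 ≤ θ) (hθ : θ ≤ 1/2) {φ : ℝ → ℝ}
    (hφsupp : ∀ τ : ℝ, (|τ| < 3/4 ∨ 8/3 < |τ|) → φ τ = 0) (hφbd : ∀ τ : ℝ, |φ τ| ≤ 1)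
    (k ℓ : ℤ) (A : (Fin 3 → ℝ) → ℂ) :
    blockL2 φ k ℓ A ≤ 4 * min (2 ^ (k * (1/2 - θ) + ℓ * θ) * hThetaNormSq θ A ^ ((1:ℝ)/2))
      (2 ^ (k * (1/2 - θ) + ℓ * θ - (max k ℓ : ℤ)) * hThetaGradNormSq θ A ^ ((1:ℝ)/2)) := by
  set s : ℝ := k * (1/2 - θ) + ℓ * θ
  rw [mul_min, ← mul_assoc, ← mul_assoc]
  refine le_min (blockL2_le_of_weight hφbd (fun ξ hk hℓ ↦ ?_) A)
    (blockL2_le_of_weight hφbd (fun ξ hk hℓ ↦ ?_) A)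
  · have hw := hThetaWeight_ge hφsupp hk hℓ hθ0 hθ
    have : (0:ℝ) ≤ 2 ^ (-(2 * s)) := by positivity
    linarith
  · have hw := hThetaWeight_ge hφsupp hk hℓ hθ0 hθ
    have hf := three_fourths_mul_two_rpow_max_le_fmod hφsupp hk hℓ
    set M : ℝ := ((max k ℓ : ℤ) : ℝ)
    have hsplit : (2:ℝ) ^ (-(2 * (s - M))) = 2 ^ (-(2 * s)) * (2 ^ M) ^ 2 := by
      rw [← Real.rpow_mul_natCast two_pos.le, ← Real.rpow_add two_pos]
      ring_nf
    have h₁ : (0:ℝ) ≤ 2 ^ (-(2 * s)) := by positivity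
    have h₂ : (0:ℝ) ≤ 3/4 * 2 ^ M := by positivity
    have hf2 : (3/4 * (2:ℝ) ^ M) ^ 2 ≤ fmod ξ ^ 2 := pow_le_pow_left₀ h₂ hf 2
    rw [hsplit]
    nlinarith [mul_le_mul hw hf2 (by positivity) (le_trans (by positivity) hw)]

theorem two_rpow_mul_blockL2_le {α θ c : ℝ} (hθ0 : 0 ≤ θ) (hθ : θ ≤ 1/2)
    (hc₁ : c ≤ 1/2 - θ) (hc₂ : c ≤ 1/2 - α + θ) {φ : ℝ → ℝ}
    (hφsupp : ∀ τ : ℝ, (|τ| < 3/4 ∨ 8/3 < |τ|) → φ τ = 0) (hφbd : ∀ τ : ℝ, |φ τ| ≤ 1)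
    (k ℓ : ℤ) (A : (Fin 3 → ℝ) → ℂ) :
    ENNReal.ofReal ((2:ℝ) ^ ((ℓ : ℝ) * (1/2 - α))) * blockL2 φ k ℓ A
      ≤ 4 * (2 ^ (-(c * |(k:ℝ) - ℓ|)) *
        min (2 ^ (((max k ℓ : ℤ) : ℝ) * (1 - α)) * hThetaNormSq θ A ^ ((1:ℝ)/2))
          (2 ^ (-(((max k ℓ : ℤ) : ℝ) * α)) * hThetaGradNormSq θ A ^ ((1:ℝ)/2))) := by
  set P := hThetaNormSq θ A ^ ((1:ℝ)/2)
  set Q := hThetaGradNormSq θ A ^ ((1:ℝ)/2)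
  set M : ℝ := ((max k ℓ : ℤ) : ℝ)
  set r : ℝ := ℓ * (1/2 - α) + (k * (1/2 - θ) + ℓ * θ)
  set v : ℝ := -(c * |(k:ℝ) - ℓ|) + M * (1 - α)
  have hrv : r ≤ v := by
    rcases le_total k ℓ with h | h
    · have h' : (k:ℝ) ≤ ℓ := Int.cast_le.mpr h
      simp only [v, r, M, max_eq_right h, abs_of_nonpos (sub_nonpos.mpr h')]
      nlinarith
    · have h' : (ℓ:ℝ) ≤ k := Int.cast_le.mpr h
      simp only [v, r, M, max_eq_left h, abs_of_nonneg (sub_nonneg.mpr h')]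
      nlinarith
  calc ENNReal.ofReal ((2:ℝ) ^ ((ℓ : ℝ) * (1/2 - α))) * blockL2 φ k ℓ A
      ≤ 2 ^ ((ℓ : ℝ) * (1/2 - α)) * (4 * min (2 ^ (k * (1/2 - θ) + ℓ * θ) * P)
          (2 ^ (k * (1/2 - θ) + ℓ * θ - M) * Q)) := by
        rw [ofReal_two_rpow]
        exact mul_le_mul_right (blockL2_le_min hθ0 hθ hφsupp hφbd k ℓ A) _
    _ = 4 * min (2 ^ r * P) (2 ^ (r - M) * Q) := by
        rw [mul_left_comm, mul_min, ← mul_assoc, ← mul_assoc,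
          ← ENNReal.rpow_add _ _ two_ne_zero ENNReal.ofNat_ne_top,
          ← ENNReal.rpow_add _ _ two_ne_zero ENNReal.ofNat_ne_top, ← add_sub_assoc]
    _ ≤ 4 * min (2 ^ v * P) (2 ^ (v - M) * Q) := by
        gcongr <;> exact one_le_two
    _ = 4 * (2 ^ (-(c * |(k:ℝ) - ℓ|)) * min (2 ^ (M * (1 - α)) * P) (2 ^ (-(M * α)) * Q)) := by
        congr 1
        rw [mul_min, ← mul_assoc, ← mul_assoc,
          ← ENNReal.rpow_add _ _ two_ne_zero ENNReal.ofNat_ne_top,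
          ← ENNReal.rpow_add _ _ two_ne_zero ENNReal.ofNat_ne_top,
          show v - M = -(c * |(k:ℝ) - ℓ|) + -(M * α) by ring]

end AnisotropicBesov

open AnisotropicBesov in
/-- For `(α, θ) ∈ (0,1/2)²` and any `a` with `a, ∇a ∈ H_θ = H^{−1/2+θ,−θ}`:
`‖a‖_{(B⁰_{2,1})_h(B^{1/2−α}_{2,1})_v} ≤ C ‖a‖_{H_θ}^α ‖∇a‖_{H_θ}^{1−α}`, where the
anisotropic Besov norm is `Σ_{k,ℓ} 2^{ℓ(1/2−α)} ‖Δ^h_kΔ^v_ℓ a‖_{L²}` (stated on the Fourier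
side with `A = â` and dyadic profile `φ` supported in `{3/4 ≤ |τ| ≤ 8/3}`, `|φ| ≤ 1`). -/
theorem stmt10 (α θ : ℝ) (hα0 : 0 < α) (hα : α < 1/2) (hθ0 : 0 < θ) (hθ : θ < 1/2)
    (φ : ℝ → ℝ) (hφsupp : ∀ τ : ℝ, (|τ| < 3/4 ∨ 8/3 < |τ|) → φ τ = 0)
    (hφbd : ∀ τ : ℝ, |φ τ| ≤ 1) :
    ∃ C : ℝ≥0, 0 < C ∧ ∀ A : (Fin 3 → ℝ) → ℂ,
      (∑' k : ℤ, ∑' ℓ : ℤ,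
          ENNReal.ofReal ((2:ℝ) ^ ((ℓ : ℝ) * (1/2 - α))) * blockL2 φ k ℓ A)
        ≤ C * (∫⁻ ξ, ENNReal.ofReal (hmod ξ ^ (-1 + 2*θ) * |ξ 2| ^ (-(2*θ)))
                * (‖A ξ‖₊ : ℝ≥0∞) ^ 2) ^ (α / 2)
            * (∫⁻ ξ, ENNReal.ofReal (hmod ξ ^ (-1 + 2*θ) * |ξ 2| ^ (-(2*θ)) * fmod ξ ^ 2)
                * (‖A ξ‖₊ : ℝ≥0∞) ^ 2) ^ ((1 - α) / 2) := by
  set c := min (1/2 - θ) (1/2 - α + θ)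
  have hc : 0 < c := lt_min (by linarith) (by linarith)
  have hm : 0 < min (1 - α) α := lt_min (by linarith) hα0
  set C : ℝ≥0∞ := 4 * (2 * dyadicSumBound c * dyadicSumBound (min (1 - α) α))
  have hC0 : C ≠ 0 := by simp [C, dyadicSumBound_ne_zero]
  have hCtop : C ≠ ⊤ := ENNReal.mul_ne_top (by simp) <| ENNReal.mul_ne_top
    (ENNReal.mul_ne_top (by simp) (dyadicSumBound_ne_top hc)) (dyadicSumBound_ne_top hm)
  refine ⟨C.toNNReal, ENNReal.toNNReal_pos hC0 hCtop, fun A ↦ ?_⟩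
  rw [ENNReal.coe_toNNReal hCtop]
  set P := hThetaNormSq θ A ^ ((1:ℝ)/2)
  set Q := hThetaGradNormSq θ A ^ ((1:ℝ)/2)
  set m : ℤ → ℝ≥0∞ := fun n ↦ min (2 ^ ((n:ℝ) * (1 - α)) * P) (2 ^ (-((n:ℝ) * α)) * Q)
  calc _ ≤ ∑' k : ℤ, ∑' ℓ : ℤ, 4 * (2 ^ (-(c * |(k:ℝ) - ℓ|)) * m (max k ℓ)) :=
        ENNReal.tsum_le_tsum fun k ↦ ENNReal.tsum_le_tsum fun ℓ ↦
          two_rpow_mul_blockL2_le hθ0.le hθ.le (min_le_left _ _) (min_le_right _ _)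
            hφsupp hφbd k ℓ A
    _ = 4 * ∑' k : ℤ, ∑' ℓ : ℤ, 2 ^ (-(c * |(k:ℝ) - ℓ|)) * m (max k ℓ) := by
        simp_rw [ENNReal.tsum_mul_left]
    _ ≤ 4 * (2 * dyadicSumBound c * ∑' n, m n) := by
        gcongr
        exact tsum_tsum_two_rpow_neg_mul_abs_sub_mul_max_le hc.le m
    _ ≤ 4 * (2 * dyadicSumBound c * (dyadicSumBound (min (1 - α) α) * (P ^ α * Q ^ (1 - α)))) := by
        gcongr
        exact tsum_min_two_rpow_mul_le (by linarith) hα0 (by ring) P Q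
    _ = C * hThetaNormSq θ A ^ (α / 2) * hThetaGradNormSq θ A ^ ((1 - α) / 2) := by
        simp only [P, Q, ← ENNReal.rpow_mul, C]
        ring_nf
end
end
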